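/- arXiv:1701.00663 — 2 statements merged into one kernel-verified Lean document; each statement's English description precedes it below -/
import Mathlib

section
/- Let H be a real inner product space, and let W and V be finite-dimensional linear subspaces of H with dim W = dim V and W ≠ {0}. Let α > 0 be such that for every nonzero w ∈ W there exists a nonzero v ∈ V with |⟨w, v⟩| ≥ α‖w‖‖v‖. Let u ∈ H and let u_h ∈ W satisfy ⟨u − u_h, v⟩ = 0 for all v ∈ V. Then for every w ∈ W one has ‖u − u_h‖ ≤ α⁻¹‖u − w‖. -/
open RealInnerProductSpace

/-!
Write `e = u - u_h` and `m = w - u_h ∈ W`, so `u - w = e - m` and `e ⊥ V`. Split `m = p + b`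
with `p` the orthogonal projection of `m` onto the line through an inf-sup partner `v` of `m`;
then `α‖m‖ ≤ ‖p‖`, and since `e - b ⊥ p`, Pythagoras gives `‖e - m‖² = ‖e - b‖² + ‖p‖²`.
With `‖e‖ ≤ ‖e - b‖ + ‖b‖`, the claim `α‖e‖ ≤ ‖e - m‖` becomes a scalar inequality: the distance
from a vector orthogonal to the axis of the cone of half-angle `arccos α` to that cone is
`α` times its length.
-/

theorem mul_add_sq_le_sq_add_sq {c d t a : ℝ} (hc : c ≤ 1)
    (h : c * (a ^ 2 + t ^ 2) ≤ a ^ 2) : c * (d + t) ^ 2 ≤ d ^ 2 + a ^ 2 := by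
  rcases hc.lt_or_eq with hlt | rfl
  · have hc' : 0 < 1 - c := sub_pos.mpr hlt
    -- `(1 - c) (d² + a² - c (d + t)²) = ((1 - c) d - c t)² + ((1 - c) a² - c t²)`
    have hscaled : 0 ≤ (1 - c) * (d ^ 2 + a ^ 2 - c * (d + t) ^ 2) := by
      nlinarith [sq_nonneg ((1 - c) * d - c * t)]
    nlinarith [nonneg_of_mul_nonneg_right hscaled hc']
  · have ht0 : t = 0 := by nlinarith
    subst ht0
    nlinarith

section InnerProductSpace

variable {H : Type*} [NormedAddCommGroup H] [InnerProductSpace ℝ H]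

theorem le_one_of_mul_norm_mul_norm_le_abs_inner {α : ℝ} {x y : H} (hx : x ≠ 0) (hy : y ≠ 0)
    (h : α * ‖x‖ * ‖y‖ ≤ |⟪x, y⟫|) : α ≤ 1 := by
  have hpos : 0 < ‖x‖ * ‖y‖ := by positivity
  rw [mul_assoc] at h
  exact (mul_le_iff_le_one_left hpos).mp (h.trans (abs_real_inner_le_norm x y))

theorem abs_inner_le_norm_starProjection_mul_norm (K : Submodule ℝ H) [K.HasOrthogonalProjection]
    (m : H) {v : H} (hv : v ∈ K) : |⟪m, v⟫| ≤ ‖K.starProjection m‖ * ‖v‖ := by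
  calc |⟪m, v⟫| = |⟪K.starProjection m, v⟫| := by
        rw [K.inner_starProjection_left_eq_right, K.starProjection_eq_self_iff.mpr hv]
    _ ≤ ‖K.starProjection m‖ * ‖v‖ := abs_real_inner_le_norm _ _

theorem mul_norm_le_norm_sub_of_mem_orthogonal (K : Submodule ℝ H) [K.HasOrthogonalProjection]
    {α : ℝ} (hα : 0 ≤ α) (hα1 : α ≤ 1) {e m : H} (he : e ∈ Kᗮ)
    (hm : α * ‖m‖ ≤ ‖K.starProjection m‖) : α * ‖e‖ ≤ ‖e - m‖ := by
  set p := K.starProjection m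
  set b := m - p
  have hp : p ∈ K := K.starProjection_apply_mem m
  have hb : b ∈ Kᗮ := K.sub_starProjection_mem_orthogonal m
  have hm_sq : ‖m‖ ^ 2 = ‖p‖ ^ 2 + ‖b‖ ^ 2 := by
    rw [← add_sub_cancel p m, sq, sq, sq]
    exact norm_add_sq_eq_norm_sq_add_norm_sq_real (K.inner_right_of_mem_orthogonal hp hb)
  have hem_sq : ‖e - m‖ ^ 2 = ‖e - b‖ ^ 2 + ‖p‖ ^ 2 := by
    rw [show e - m = (e - b) - p by simp only [b]; abel, sq, sq, sq]
    exact norm_sub_sq_eq_norm_sq_add_norm_sq_real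
      (K.inner_left_of_mem_orthogonal hp (Kᗮ.sub_mem he hb))
  have hpb : α ^ 2 * (‖p‖ ^ 2 + ‖b‖ ^ 2) ≤ ‖p‖ ^ 2 := by
    rw [← hm_sq, ← mul_pow]
    exact pow_le_pow_left₀ (by positivity) hm 2
  have key := mul_add_sq_le_sq_add_sq (d := ‖e - b‖) (pow_le_one₀ hα hα1) hpb
  rw [← hem_sq, ← mul_pow] at key
  calc α * ‖e‖ ≤ α * (‖e - b‖ + ‖b‖) := by gcongr; exact norm_le_norm_sub_add e b
    _ ≤ ‖e - m‖ := (pow_le_pow_iff_left₀ (by positivity) (norm_nonneg _) two_ne_zero).mp key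

end InnerProductSpace

theorem galerkin_quasi_optimality_inner_general {H : Type*}
    [NormedAddCommGroup H] [InnerProductSpace ℝ H]
    (W V : Submodule ℝ H) (hW : W ≠ ⊥)
    (α : ℝ) (hα : 0 < α)
    (hinfsup : ∀ w ∈ W, w ≠ 0 → ∃ v ∈ V, v ≠ 0 ∧ |⟪w, v⟫| ≥ α * ‖w‖ * ‖v‖)
    (u uh : H) (huh : uh ∈ W)
    (hgalerkin : ∀ v ∈ V, ⟪u - uh, v⟫ = 0) :
    ∀ w ∈ W, ‖u - uh‖ ≤ α⁻¹ * ‖u - w‖ := by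
  intro w hw
  have hα1 : α ≤ 1 := by
    obtain ⟨w₀, hw₀, hw₀0⟩ := W.exists_mem_ne_zero_of_ne_bot hW
    obtain ⟨v₀, -, hv₀0, hv₀⟩ := hinfsup w₀ hw₀ hw₀0
    exact le_one_of_mul_norm_mul_norm_le_abs_inner hw₀0 hv₀0 hv₀
  rw [le_inv_mul_iff₀ hα, ← sub_sub_sub_cancel_right u w uh]
  by_cases hm : w - uh = 0
  · rw [hm, sub_zero]
    exact mul_le_of_le_one_left (norm_nonneg _) hα1
  obtain ⟨v, hvV, hv0, hv⟩ := hinfsup (w - uh) (W.sub_mem hw huh) hm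
  refine mul_norm_le_norm_sub_of_mem_orthogonal (ℝ ∙ v) hα.le hα1 ?_ ?_
  · rw [Submodule.mem_orthogonal_singleton_iff_inner_right, real_inner_comm]
    exact hgalerkin v hvV
  · have hproj := hv.trans (abs_inner_le_norm_starProjection_mul_norm (ℝ ∙ v) (w - uh)
      (Submodule.mem_span_singleton_self v))
    exact le_of_mul_le_mul_right hproj (norm_pos_iff.mpr hv0)

/-- Sharpened quasi-optimality in inner product spaces (used in Corollary 3.1): if the inner
product satisfies the inf-sup condition with constant `α > 0` on finite-dimensional subspaces
`W, V` of equal dimension with `W ≠ {0}`, and `u_h ∈ W` satisfies the Galerkin relation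
`⟨u − u_h, v⟩ = 0` for all `v ∈ V`, then `‖u − u_h‖ ≤ α⁻¹‖u − w‖` for every `w ∈ W`. -/
theorem galerkin_quasi_optimality_inner {H : Type*}
    [NormedAddCommGroup H] [InnerProductSpace ℝ H]
    (W V : Submodule ℝ H) [FiniteDimensional ℝ W] [FiniteDimensional ℝ V]
    (hdim : Module.finrank ℝ W = Module.finrank ℝ V) (hW : W ≠ ⊥)
    (α : ℝ) (hα : 0 < α)
    (hinfsup : ∀ w ∈ W, w ≠ 0 → ∃ v ∈ V, v ≠ 0 ∧ |⟪w, v⟫| ≥ α * ‖w‖ * ‖v‖)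
    (u uh : H) (huh : uh ∈ W)
    (hgalerkin : ∀ v ∈ V, ⟪u - uh, v⟫ = 0) :
    ∀ w ∈ W, ‖u - uh‖ ≤ α⁻¹ * ‖u - w‖ :=
  galerkin_quasi_optimality_inner_general W V hW α hα hinfsup u uh huh hgalerkin
end

section
/- Let H be a real normed vector space, B : H × H → ℝ a bilinear form, and M ≥ 0 a constant with |B(z, v)| ≤ M‖z‖‖v‖ for all z, v ∈ H. Let W and V be linear subspaces of H on which B satisfies the inf-sup condition with constant α > 0, i.e. for every nonzero w ∈ W there exists a nonzero v ∈ V with |B(w, v)| ≥ α‖w‖‖v‖. Let F : V → ℝ be linear, let u ∈ H, and let ρ ≥ 0 be such that |B(u, v) − F(v)| ≤ ρ‖v‖ for all v ∈ V. If u_h ∈ W satisfies B(u_h, v) = F(v) for all v ∈ V, then for every w ∈ W one has ‖u − u_h‖ ≤ (1 + M/α)‖u − w‖ + ρ/α. -/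
/-- Strang-type abstract error estimate with consistency residual (engine of Theorems 3.2–3.4):
if the bounded bilinear form `B` satisfies the inf-sup condition with constant `α > 0` on
`(W, V)`, `F : V → ℝ` is linear, `|B(u, v) − F(v)| ≤ ρ‖v‖` for all `v ∈ V`, and `u_h ∈ W`
satisfies `B(u_h, v) = F(v)` for all `v ∈ V`, then
`‖u − u_h‖ ≤ (1 + M/α)‖u − w‖ + ρ/α` for every `w ∈ W`. -/
theorem strang_error_estimate {H : Type*} [NormedAddCommGroup H] [NormedSpace ℝ H]
    (B : H →ₗ[ℝ] H →ₗ[ℝ] ℝ) (M : ℝ) (hM : 0 ≤ M)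
    (hbound : ∀ z v : H, |B z v| ≤ M * ‖z‖ * ‖v‖)
    (W V : Submodule ℝ H) (α : ℝ) (hα : 0 < α)
    (hinfsup : ∀ w ∈ W, w ≠ 0 → ∃ v ∈ V, v ≠ 0 ∧ |B w v| ≥ α * ‖w‖ * ‖v‖)
    (F : V →ₗ[ℝ] ℝ) (u : H) (ρ : ℝ) (hρ : 0 ≤ ρ)
    (hres : ∀ v : V, |B u v - F v| ≤ ρ * ‖(v : H)‖)
    (uh : H) (huh : uh ∈ W)
    (hsolve : ∀ v : V, B uh v = F v) :
    ∀ w ∈ W, ‖u - uh‖ ≤ (1 + M / α) * ‖u - w‖ + ρ / α := by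
  intro w hw
  have key : ‖uh - w‖ ≤ (M * ‖u - w‖ + ρ) / α := by
    by_cases he : uh - w = 0
    · rw [he, norm_zero]
      positivity
    · obtain ⟨v, hv, hvne, hge⟩ := hinfsup (uh - w) (W.sub_mem huh hw) he
      have hvpos : (0:ℝ) < ‖v‖ := norm_pos_iff.mpr hvne
      have hBe : B (uh - w) v = (F ⟨v, hv⟩ - B u v) + B (u - w) v := by
        have := hsolve ⟨v, hv⟩
        simp only [map_sub, LinearMap.sub_apply] at *
        linarith [this]
      have h1 : |B (uh - w) v| ≤ ρ * ‖v‖ + M * ‖u - w‖ * ‖v‖ := by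
        rw [hBe]
        calc |(F ⟨v, hv⟩ - B u v) + B (u - w) v|
            ≤ |F ⟨v, hv⟩ - B u v| + |B (u - w) v| := abs_add_le _ _
          _ ≤ ρ * ‖v‖ + M * ‖u - w‖ * ‖v‖ := by
              have := hres ⟨v, hv⟩
              rw [abs_sub_comm] at this
              exact add_le_add this (hbound _ _)
      have h2 : α * ‖uh - w‖ * ‖v‖ ≤ (ρ + M * ‖u - w‖) * ‖v‖ := by
        calc α * ‖uh - w‖ * ‖v‖ ≤ |B (uh - w) v| := hge
          _ ≤ ρ * ‖v‖ + M * ‖u - w‖ * ‖v‖ := h1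
          _ = (ρ + M * ‖u - w‖) * ‖v‖ := by ring
      have h3 : α * ‖uh - w‖ ≤ ρ + M * ‖u - w‖ :=
        le_of_mul_le_mul_right (by linarith [h2]) hvpos
      rw [le_div_iff₀ hα]
      linarith
  have htri : ‖u - uh‖ ≤ ‖u - w‖ + ‖uh - w‖ := by
    calc ‖u - uh‖ = ‖(u - w) + (w - uh)‖ := by rw [sub_add_sub_cancel]
      _ ≤ ‖u - w‖ + ‖w - uh‖ := norm_add_le _ _
      _ = ‖u - w‖ + ‖uh - w‖ := by rw [norm_sub_rev w uh]
  have : (M * ‖u - w‖ + ρ) / α = (M / α) * ‖u - w‖ + ρ / α := by ring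
  calc ‖u - uh‖ ≤ ‖u - w‖ + (M * ‖u - w‖ + ρ) / α := le_trans htri (by linarith [key])
    _ = (1 + M / α) * ‖u - w‖ + ρ / α := by field_simp; ring
end
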